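/- arXiv:1009.2389 — 2 statements merged into one kernel-verified Lean document; each statement's English description precedes it below -/
import Mathlib

section
/- Let (A, φ) be a noncommutative probability space and let D : A → A be a derivation, i.e. a linear map with D(ab) = D(a)b + aD(b) for all a, b ∈ A. Set φ^{(i)} := φ ∘ D^i for 0 ≤ i ≤ k, so that (A, (φ^{(i)})_{0≤i≤k}) is an infinitesimal noncommutative probability space of order k; let (κ_n^{(i)}) be its infinitesimal non-crossing cumulant functionals and let (κ_n) be the free cumulant functionals of (A, φ). Then for every n ≥ 1, every 0 ≤ i ≤ k and all a_1, ..., a_n ∈ A: κ_n^{(i)}(a_1, ..., a_n) = Σ_{λ ∈ Λ_{n,i}} (i!/(λ_1!···λ_n!)) κ_n(D^{λ_1}(a_1), ..., D^{λ_n}(a_n)). -/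
open scoped BigOperators
attribute [local instance] Classical.propDecidable

/-- A (set) partition of a type `X`: nonempty blocks, every point in a unique block. -/
def IsPartition {X : Type*} (P : Finset (Finset X)) : Prop :=
  (∀ B ∈ P, B.Nonempty) ∧ ∀ x : X, ∃! B, B ∈ P ∧ x ∈ B

/-- Non-crossing collection of blocks in a linear order. -/
def IsNonCrossing {X : Type*} [LinearOrder X] (P : Finset (Finset X)) : Prop :=
  ∀ a b c d : X, a < b → b < c → c < d →
    (∃ B ∈ P, a ∈ B ∧ c ∈ B) → (∃ B ∈ P, b ∈ B ∧ d ∈ B) →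
    ∃ B ∈ P, a ∈ B ∧ b ∈ B

/-- The finset `NC(n)` of non-crossing partitions of `[n]` (modelled on `Fin n`). -/
noncomputable def ncFinset (n : ℕ) : Finset (Finset (Finset (Fin n))) :=
  Finset.univ.filter fun P => IsPartition P ∧ IsNonCrossing P

/-- The subtuple `(a_1,…,a_n)|V` of the entries indexed by `V`, in increasing order. -/
noncomputable def restrictTuple {A : Type*} {n : ℕ} (a : Fin n → A) (V : Finset (Fin n)) :
    Fin V.card → A :=
  fun i => a (V.orderIsoOfFin rfl i).1

/-- The defining (infinitesimal) moment-cumulant formula: the family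
`(κ^{(i)}_n)_{n ≥ 1, 0 ≤ i ≤ k}` of multilinear functionals (indexed by `ℕ`, only the
indices `i ≤ k` being relevant) is the family of infinitesimal non-crossing cumulant
functionals of `(A, (φ^{(i)})_{0 ≤ i ≤ k})`:
`Σ_{p ∈ NC(n)} Σ_{f : p → ℕ, Σ f = i} (i!/∏_V f(V)!) ∏_{V∈p} κ^{(f(V))}_{|V|}((a)|V)
  = φ^{(i)}(a_1⋯a_n)`. -/
def InfCumFormula (k : ℕ) {A : Type*} [Ring A] [Algebra ℂ A]
    (φ : ℕ → (A →ₗ[ℂ] ℂ))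
    (κ : ℕ → (n : ℕ) → MultilinearMap ℂ (fun _ : Fin n => A) ℂ) : Prop :=
  ∀ i ≤ k, ∀ (n : ℕ), 1 ≤ n → ∀ a : Fin n → A,
    ∑ p ∈ ncFinset n,
      ∑ f ∈ (Fintype.piFinset fun _ : {V // V ∈ p} => Finset.range (i + 1)) |>.filter
          (fun f => ∑ V, f V = i),
        ((i.factorial : ℂ) / ∏ V, ((f V).factorial : ℂ)) *
          ∏ V : {V // V ∈ p}, κ (f V) V.1.card (restrictTuple a V.1)
    = φ i (List.ofFn a).prod

/-!
By the multinomial Leibniz rule, `φ(D^i(a_1⋯a_n))` is the sum over `λ ∈ Λ_{n,i}` of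
`(i!/λ!) φ(D^{λ_1}a_1 ⋯ D^{λ_n}a_n)`, and each of these moments expands into free cumulants over
`NC(n)`. For a fixed partition `p`, a tuple `λ` is the same as its block totals `f(V)` together
with its restrictions to the blocks, and `i!/λ! = (i!/∏_V f(V)!) ∏_V (f(V)!/λ|_V!)`; hence the
right-hand side of the theorem satisfies the infinitesimal moment-cumulant formula. That formula
determines the infinitesimal cumulants by strong induction on `n`, since the one-block partition
contributes `κ^{(i)}_n` itself and all other blocks are shorter.
-/

open Finset

theorem Finset.Nat.sum_antidiagonalTuple_succ {M : Type*} [AddCommMonoid M] (k n : ℕ)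
    (f : (Fin (k + 1) → ℕ) → M) :
    ∑ x ∈ Nat.antidiagonalTuple (k + 1) n, f x =
      ∑ ij ∈ antidiagonal n, ∑ x ∈ Nat.antidiagonalTuple k ij.2, f (Fin.cons ij.1 x) := by
  change ((List.Nat.antidiagonalTuple (k + 1) n : Multiset (Fin (k + 1) → ℕ)).map f).sum =
    ((List.Nat.antidiagonal n : Multiset (ℕ × ℕ)).map
      fun ij : ℕ × ℕ => ((List.Nat.antidiagonalTuple k ij.2 : Multiset (Fin k → ℕ)).map
        fun x => f (Fin.cons ij.1 x)).sum).sum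
  simp only [List.Nat.antidiagonalTuple, Multiset.map_coe, Multiset.sum_coe, List.flatMap_def,
    List.map_flatten, List.sum_flatten, List.map_map, Function.comp_def]

theorem Nat.multinomial_univ_fin_cons {n : ℕ} (j : ℕ) (μ : Fin n → ℕ) :
    Nat.multinomial univ (Fin.cons j μ : Fin (n + 1) → ℕ) =
      (j + ∑ t, μ t).choose j * Nat.multinomial univ μ := by
  rw [Fin.univ_succ, Nat.multinomial_cons, Fin.cons_zero]
  simp [Nat.multinomial, Finset.sum_map, Finset.prod_map]

theorem Nat.cast_multinomial {α K : Type*} [Field K] [CharZero K] (s : Finset α) (f : α → ℕ) :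
    (Nat.multinomial s f : K) = (∑ i ∈ s, f i).factorial / ∏ i ∈ s, ((f i).factorial : K) := by
  rw [eq_div_iff (prod_ne_zero_iff.2 fun _ _ => by exact_mod_cast Nat.factorial_ne_zero _),
    ← Nat.multinomial_spec s f]
  push_cast
  ring

section Leibniz
variable {R A : Type*} [Semiring R]

theorem pow_apply_mul_of_leibniz [Semiring A] [Module R A] {D : A →ₗ[R] A}
    (hD : ∀ a b, D (a * b) = D a * b + a * D b) (i : ℕ) (x y : A) :
    (D ^ i) (x * y) =
      ∑ ij ∈ antidiagonal i, i.choose ij.1 • ((D ^ ij.1) x * (D ^ ij.2) y) := by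
  induction i with
  | zero => simp
  | succ i ih =>
    rw [sum_antidiagonal_choose_succ_nsmul (fun i j => (D ^ i) x * (D ^ j) y) i]
    simp only [pow_succ', Module.End.mul_apply, ih, map_sum, map_nsmul, hD, nsmul_add,
      sum_add_distrib]
    rw [add_comm]
    congr 1
    refine sum_congr rfl fun ij hij => ?_
    rw [Nat.choose_symm_of_eq_add (mem_antidiagonal.1 hij).symm]

variable [Ring A] [Module R A] {D : A →ₗ[R] A}

theorem pow_succ_apply_one_of_leibniz (hD : ∀ a b, D (a * b) = D a * b + a * D b) (i : ℕ) :
    (D ^ (i + 1)) (1 : A) = 0 := by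
  have h1 : D 1 = 0 := by simpa using hD 1 1
  rw [pow_succ, Module.End.mul_apply, h1, map_zero]

theorem pow_apply_prod_ofFn_of_leibniz (hD : ∀ a b, D (a * b) = D a * b + a * D b) {n : ℕ}
    (a : Fin n → A) (i : ℕ) :
    (D ^ i) (List.ofFn a).prod = ∑ lam ∈ Nat.antidiagonalTuple n i,
      Nat.multinomial univ lam • (List.ofFn fun j => (D ^ lam j) (a j)).prod := by
  induction n generalizing i with
  | zero => cases i <;> simp [pow_succ_apply_one_of_leibniz hD]
  | succ n ih =>
    rw [List.ofFn_succ, List.prod_cons, pow_apply_mul_of_leibniz hD,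
      Nat.sum_antidiagonalTuple_succ]
    refine sum_congr rfl fun ij hij => ?_
    rw [ih, mul_sum, smul_sum]
    refine sum_congr rfl fun μ hμ => ?_
    rw [Nat.multinomial_univ_fin_cons, Nat.mem_antidiagonalTuple.1 hμ,
      mem_antidiagonal.1 hij, List.ofFn_succ, List.prod_cons, mul_smul_comm, smul_smul]
    simp only [Fin.cons_zero, Fin.cons_succ]

end Leibniz

namespace IsPartition
variable {n : ℕ} {p : Finset (Finset (Fin n))}

noncomputable def sigmaBlocksEquiv (hp : IsPartition p) :
    (Σ V : {V // V ∈ p}, Fin V.1.card) ≃ Fin n :=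
  Equiv.ofBijective (fun x => (x.1.1.orderIsoOfFin rfl x.2 : Fin n)) <| by
    constructor
    · rintro ⟨V, s⟩ ⟨W, t⟩ h
      dsimp only at h
      obtain rfl : V = W := Subtype.ext <| (hp.2 _).unique
        ⟨V.2, (V.1.orderIsoOfFin rfl s).2⟩ ⟨W.2, h ▸ (W.1.orderIsoOfFin rfl t).2⟩
      exact Sigma.ext rfl (heq_of_eq ((V.1.orderIsoOfFin rfl).injective (Subtype.ext h)))
    · intro x
      obtain ⟨V, hV, hx⟩ := (hp.2 x).exists
      exact ⟨⟨⟨V, hV⟩, (V.orderIsoOfFin rfl).symm ⟨x, hx⟩⟩, by simp⟩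

@[to_additive]
theorem prod_eq_prod_blocks {M : Type*} [CommMonoid M] (hp : IsPartition p) (h : Fin n → M) :
    ∏ j, h j = ∏ V : {V // V ∈ p}, ∏ t, h (hp.sigmaBlocksEquiv ⟨V, t⟩) := by
  rw [← hp.sigmaBlocksEquiv.prod_comp, Fintype.prod_sigma]

theorem card_lt_of_ne_singleton_univ (hp : IsPartition p) (hne : p ≠ {univ})
    {V : Finset (Fin n)} (hV : V ∈ p) : V.card < n := by
  refine ((card_le_univ V).trans_eq (Fintype.card_fin n)).lt_of_ne fun hcard => hne ?_
  obtain rfl : V = univ := eq_univ_of_card V (hcard.trans (Fintype.card_fin n).symm)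
  refine eq_singleton_iff_unique_mem.2 ⟨hV, fun W hW => ?_⟩
  obtain ⟨x, hx⟩ := hp.1 W hW
  exact (hp.2 x).unique ⟨hW, hx⟩ ⟨hV, mem_univ x⟩

end IsPartition

theorem isPartition_of_mem_ncFinset {n : ℕ} {p : Finset (Finset (Fin n))}
    (hp : p ∈ ncFinset n) : IsPartition p :=
  (mem_filter.1 hp).2.1

theorem singleton_univ_mem_ncFinset {n : ℕ} (hn : 1 ≤ n) :
    ({univ} : Finset (Finset (Fin n))) ∈ ncFinset n := by
  have : Nonempty (Fin n) := ⟨⟨0, hn⟩⟩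
  refine mem_filter.2 ⟨mem_univ _, ⟨?_, fun x => ?_⟩, ?_⟩
  · simp
  · exact ⟨univ, by simp, by simp⟩
  · intro a b _ _ _ _ _ _ _
    exact ⟨univ, mem_singleton_self _, mem_univ a, mem_univ b⟩

theorem apply_card_univ_restrictTuple_univ {α β : Type*} {n : ℕ}
    (F : (m : ℕ) → (Fin m → α) → β) (a : Fin n → α) :
    F (univ : Finset (Fin n)).card (restrictTuple a univ) = F n a := by
  have h : (univ : Finset (Fin n)).card = n := card_fin n
  have hcast : restrictTuple a univ = a ∘ Fin.cast h := by
    funext t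
    have := orderEmbOfFin_unique rfl (f := Fin.cast h) (fun _ => mem_univ _) fun _ _ hst => hst
    simp only [restrictTuple, coe_orderIsoOfFin_apply, Function.comp_apply, ← this]
  rw [hcast]
  suffices ∀ m (h : m = n), F m (a ∘ Fin.cast h) = F n a from this _ h
  rintro m rfl
  rfl

section InfMoment
variable {A : Type*}

noncomputable def infPartitionTerm (κ : ℕ → (m : ℕ) → (Fin m → A) → ℂ) {n : ℕ}
    (p : Finset (Finset (Fin n))) (i : ℕ) (a : Fin n → A) : ℂ :=
  ∑ f ∈ (Fintype.piFinset fun _ : {V // V ∈ p} => range (i + 1)) |>.filter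
      (fun f => ∑ V, f V = i),
    ((i.factorial : ℂ) / ∏ V, ((f V).factorial : ℂ)) *
      ∏ V : {V // V ∈ p}, κ (f V) V.1.card (restrictTuple a V.1)

variable {κ₁ κ₂ : ℕ → (m : ℕ) → (Fin m → A) → ℂ} {n : ℕ}

theorem infPartitionTerm_congr {p : Finset (Finset (Fin n))} {i : ℕ} {a : Fin n → A}
    (h : ∀ V ∈ p, ∀ j ≤ i,
      κ₁ j V.card (restrictTuple a V) = κ₂ j V.card (restrictTuple a V)) :
    infPartitionTerm κ₁ p i a = infPartitionTerm κ₂ p i a := by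
  refine sum_congr rfl fun f hf => ?_
  rw [mem_filter, Fintype.mem_piFinset] at hf
  congr 1
  exact prod_congr rfl fun V _ => h V V.2 (f V) (Nat.lt_succ_iff.1 (mem_range.1 (hf.1 V)))

theorem infPartitionTerm_singleton_univ (κ : ℕ → (m : ℕ) → (Fin m → A) → ℂ) (i : ℕ)
    (a : Fin n → A) : infPartitionTerm κ {univ} i a = κ i n a := by
  have hfilter : ((Fintype.piFinset fun _ : {V // V ∈ ({univ} : Finset (Finset (Fin n)))} =>
      range (i + 1)) |>.filter (fun f => ∑ V, f V = i)) = {fun _ => i} := by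
    ext f
    simp +contextual [funext_iff, Unique.forall_iff]
  rw [infPartitionTerm, hfilter, sum_singleton, Fintype.prod_unique, Fintype.prod_unique,
    div_self (by exact_mod_cast i.factorial_ne_zero), one_mul]
  exact apply_card_univ_restrictTuple_univ (κ i) a

theorem eq_of_sum_infPartitionTerm_eq (k : ℕ)
    (h : ∀ i ≤ k, ∀ n, 1 ≤ n → ∀ a : Fin n → A,
      ∑ p ∈ ncFinset n, infPartitionTerm κ₁ p i a = ∑ p ∈ ncFinset n, infPartitionTerm κ₂ p i a) :
    ∀ n, 1 ≤ n → ∀ i ≤ k, ∀ a : Fin n → A, κ₁ i n a = κ₂ i n a := by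
  intro n
  induction n using Nat.strong_induction_on with
  | _ n ih =>
  intro hn i hi a
  have hsum := h i hi n hn a
  have hrest : ∀ p ∈ (ncFinset n).erase {univ},
      infPartitionTerm κ₁ p i a = infPartitionTerm κ₂ p i a := by
    intro p hp
    obtain ⟨hne, hp⟩ := mem_erase.1 hp
    have hp := isPartition_of_mem_ncFinset hp
    exact infPartitionTerm_congr fun V hV j hj => ih _ (hp.card_lt_of_ne_singleton_univ hne hV)
      (card_pos.2 (hp.1 V hV)) j (hj.trans hi) _
  rwa [← add_sum_erase _ _ (singleton_univ_mem_ncFinset hn),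
    ← add_sum_erase _ _ (singleton_univ_mem_ncFinset hn), sum_congr rfl hrest, add_left_inj,
    infPartitionTerm_singleton_univ, infPartitionTerm_singleton_univ] at hsum

end InfMoment

section DerivedCumulant
variable {A : Type*}

noncomputable def derivedCumulant [AddCommMonoid A] [Module ℂ A] (D : A →ₗ[ℂ] A)
    (κ : (m : ℕ) → (Fin m → A) → ℂ) (i m : ℕ) (v : Fin m → A) : ℂ :=
  ∑ lam ∈ Nat.antidiagonalTuple m i,
    ((i.factorial : ℂ) / ∏ j, ((lam j).factorial : ℂ)) * κ m (fun j => (D ^ lam j) (v j))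

theorem infPartitionTerm_derivedCumulant [AddCommMonoid A] [Module ℂ A] (D : A →ₗ[ℂ] A)
    (κ : (m : ℕ) → (Fin m → A) → ℂ) {n : ℕ} {p : Finset (Finset (Fin n))}
    (hp : IsPartition p) (i : ℕ) (a : Fin n → A) :
    infPartitionTerm (derivedCumulant D κ) p i a =
      ∑ lam ∈ Nat.antidiagonalTuple n i, ((i.factorial : ℂ) / ∏ j, ((lam j).factorial : ℂ)) *
        ∏ V ∈ p, κ V.card (restrictTuple (fun j => (D ^ lam j) (a j)) V) := by
  simp_rw [infPartitionTerm, derivedCumulant, prod_univ_sum, mul_sum]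
  rw [sum_sigma']
  -- `λ ↔ (f, g)`: `f` the block totals of `λ`, `g V` its restriction to the block `V`
  refine sum_nbij' (fun s j => Sigma.uncurry s.2 (hp.sigmaBlocksEquiv.symm j))
    (fun lam => ⟨fun V => ∑ t, lam (hp.sigmaBlocksEquiv ⟨V, t⟩),
      fun V t => lam (hp.sigmaBlocksEquiv ⟨V, t⟩)⟩) ?_ ?_ ?_ ?_ ?_
  · rintro ⟨f, g⟩ hs
    simp only [mem_sigma, mem_filter, Fintype.mem_piFinset, Nat.mem_antidiagonalTuple] at hs ⊢
    rw [hp.sum_eq_sum_blocks]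
    -- `Sigma.uncurry` must stay folded until `e.symm (e x)` is cancelled: once unfolded, the two
    -- components of the dependent pair cannot be rewritten separately.
    simp only [Equiv.symm_apply_apply]
    simp only [Sigma.uncurry, hs.2, hs.1.2]
  · intro lam hlam
    simp only [mem_sigma, mem_filter, Fintype.mem_piFinset, Nat.mem_antidiagonalTuple,
      mem_range, Nat.lt_succ_iff, implies_true, and_true] at hlam ⊢
    rw [hp.sum_eq_sum_blocks] at hlam
    exact ⟨fun V => (single_le_sum (f := fun V => ∑ t, lam (hp.sigmaBlocksEquiv ⟨V, t⟩))
      (fun _ _ => Nat.zero_le _) (mem_univ V)).trans_eq hlam, hlam⟩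
  · rintro ⟨f, g⟩ hs
    simp only [mem_sigma, mem_filter, Fintype.mem_piFinset, Nat.mem_antidiagonalTuple] at hs
    simp only [Equiv.symm_apply_apply]
    simp only [Sigma.uncurry, hs.2]
  · intro lam _
    funext j
    simp only [Sigma.uncurry, Sigma.eta, Equiv.apply_symm_apply]
  · rintro ⟨f, g⟩ hs
    simp only [mem_sigma, mem_filter, Fintype.mem_piFinset, Nat.mem_antidiagonalTuple] at hs
    rw [← prod_coe_sort p, hp.prod_eq_prod_blocks, prod_mul_distrib, ← mul_assoc]
    congr 1
    · simp only [Equiv.symm_apply_apply]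
      simp only [Sigma.uncurry]
      rw [prod_div_distrib, div_mul_div_cancel₀
        (prod_ne_zero_iff.2 fun _ _ => by exact_mod_cast Nat.factorial_ne_zero _)]
    · refine prod_congr rfl fun V _ => congrArg _ (funext fun t => ?_)
      show _ = (D ^ Sigma.uncurry g (hp.sigmaBlocksEquiv.symm (hp.sigmaBlocksEquiv ⟨V, t⟩))) _
      rw [Equiv.symm_apply_apply]
      rfl

theorem sum_infPartitionTerm_derivedCumulant [Ring A] [Module ℂ A] {D : A →ₗ[ℂ] A}
    (hD : ∀ a b : A, D (a * b) = D a * b + a * D b) (φ : A →ₗ[ℂ] ℂ)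
    {κ : (m : ℕ) → (Fin m → A) → ℂ} {n : ℕ}
    (hκ : ∀ b : Fin n → A,
      ∑ p ∈ ncFinset n, ∏ V ∈ p, κ V.card (restrictTuple b V) = φ (List.ofFn b).prod)
    (i : ℕ) (a : Fin n → A) :
    ∑ p ∈ ncFinset n, infPartitionTerm (derivedCumulant D κ) p i a =
      φ ((D ^ i) (List.ofFn a).prod) := by
  rw [pow_apply_prod_ofFn_of_leibniz hD, map_sum, sum_congr rfl fun p hp =>
    infPartitionTerm_derivedCumulant D κ (isPartition_of_mem_ncFinset hp) i a, sum_comm]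
  refine sum_congr rfl fun lam hlam => ?_
  rw [← mul_sum, hκ, map_nsmul, nsmul_eq_mul, Nat.cast_multinomial,
    Nat.mem_antidiagonalTuple.1 hlam]

end DerivedCumulant

theorem stmt3_general (k : ℕ) (A : Type*) [Ring A] [Algebra ℂ A]
    (φ : A →ₗ[ℂ] ℂ)
    (D : A →ₗ[ℂ] A) (hD : ∀ a b : A, D (a * b) = D a * b + a * D b)
    (κ : (n : ℕ) → MultilinearMap ℂ (fun _ : Fin n => A) ℂ)
    (hκ : ∀ (n : ℕ), 1 ≤ n → ∀ a : Fin n → A,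
      ∑ p ∈ ncFinset n, ∏ V ∈ p, κ V.card (restrictTuple a V) = φ (List.ofFn a).prod)
    (κinf : ℕ → (n : ℕ) → MultilinearMap ℂ (fun _ : Fin n => A) ℂ)
    (hκinf : InfCumFormula k (fun i => φ ∘ₗ (D ^ i)) κinf)
    (n : ℕ) (hn : 1 ≤ n) (i : ℕ) (hi : i ≤ k) (a : Fin n → A) :
    κinf i n a = ∑ lam ∈ Finset.Nat.antidiagonalTuple n i,
      ((i.factorial : ℂ) / ∏ j, ((lam j).factorial : ℂ)) *
        κ n (fun j => (D ^ (lam j)) (a j)) := by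
  refine eq_of_sum_infPartitionTerm_eq (κ₁ := fun i m => κinf i m)
    (κ₂ := derivedCumulant D fun m => κ m) k (fun i hi n hn a => ?_) n hn i hi a
  rw [sum_infPartitionTerm_derivedCumulant hD φ (hκ n hn)]
  exact hκinf i hi n hn a

/-- **Statement 3.** Let `(A, φ)` be a noncommutative probability space, `D : A → A` a
derivation, and `φ^{(i)} := φ ∘ D^i` for `0 ≤ i ≤ k`. If `(κ_n)` are the free cumulant
functionals of `(A, φ)` and `(κ_n^{(i)})` the infinitesimal non-crossing cumulant
functionals of `(A, (φ ∘ D^i)_{0 ≤ i ≤ k})`, then for all `n ≥ 1`, `0 ≤ i ≤ k` and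
`a_1, …, a_n ∈ A`:
`κ_n^{(i)}(a_1,…,a_n) = Σ_{λ ∈ Λ_{n,i}} (i!/(λ_1!⋯λ_n!)) κ_n(D^{λ_1}a_1, …, D^{λ_n}a_n)`. -/
theorem stmt3 (k : ℕ) (A : Type*) [Ring A] [Algebra ℂ A]
    (φ : A →ₗ[ℂ] ℂ) (hφ : φ 1 = 1)
    (D : A →ₗ[ℂ] A) (hD : ∀ a b : A, D (a * b) = D a * b + a * D b)
    (κ : (n : ℕ) → MultilinearMap ℂ (fun _ : Fin n => A) ℂ)
    (hκ : ∀ (n : ℕ), 1 ≤ n → ∀ a : Fin n → A,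
      ∑ p ∈ ncFinset n, ∏ V ∈ p, κ V.card (restrictTuple a V) = φ (List.ofFn a).prod)
    (κinf : ℕ → (n : ℕ) → MultilinearMap ℂ (fun _ : Fin n => A) ℂ)
    (hκinf : InfCumFormula k (fun i => φ ∘ₗ (D ^ i)) κinf)
    (n : ℕ) (hn : 1 ≤ n) (i : ℕ) (hi : i ≤ k) (a : Fin n → A) :
    κinf i n a = ∑ lam ∈ Finset.Nat.antidiagonalTuple n i,
      ((i.factorial : ℂ) / ∏ j, ((lam j).factorial : ℂ)) *
        κ n (fun j => (D ^ (lam j)) (a j)) :=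
  stmt3_general k A φ D hD κ hκ κinf hκinf n hn i hi a
end

section
/- Fix n ≥ 1 and take k = 1. Let σ : [2n] → [2n] be the involution defined by σ(x) = x + n if x ≤ n and σ(x) = x − n if x > n. Then a non-crossing partition π of [2n] is invariant under σ (i.e., the image under σ of every block of π is again a block of π) if and only if π ∈ NC^{(1)}(n). (Under the identification of [±n] = {1 < 2 < ... < n < −1 < −2 < ... < −n} with [2n] via i ↦ i and −i ↦ n + i, the σ-invariant non-crossing partitions of [2n] are exactly Reiner's type B non-crossing partitions NC^B(n); thus NC^B(n) = NC^{(1)}(n).) -/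
open scoped BigOperators
attribute [local instance] Classical.propDecidable

/-- The interleaved set `[m] ∪ [m̄]` with order `1 < 1̄ < 2 < 2̄ < ⋯ < m < m̄`
(unbarred = `false`, barred = `true`). -/
abbrev Interl (m : ℕ) := Lex (Fin m × Bool)

/-- The copy of a block of `[m]` inside the unbarred part of `[m] ∪ [m̄]`. -/
def unbar {m : ℕ} (B : Finset (Fin m)) : Finset (Interl m) :=
  B.image fun i => toLex (i, false)

/-- The copy of a block of `[m]` inside the barred part of `[m] ∪ [m̄]`. -/
def barred {m : ℕ} (B : Finset (Fin m)) : Finset (Interl m) :=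
  B.image fun i => toLex (i, true)

/-- The union `p ∪ q` of a partition `p` of `[m]` and a partition `q` of the barred copy
`[m̄]` (blocks of `q` being recorded by their unbarred labels), as a collection of blocks
of the interleaved set `[m] ∪ [m̄]`. -/
noncomputable def unionPart {m : ℕ} (p q : Finset (Finset (Fin m))) :
    Finset (Finset (Interl m)) :=
  p.image unbar ∪ q.image barred

/-- `P` refines `Q` (reverse refinement order: `P ≼ Q`). -/
def Refines {X : Type*} (P Q : Finset (Finset X)) : Prop :=
  ∀ B ∈ P, ∃ C ∈ Q, B ⊆ C

/-- `q` is the Kreweras complement of `p`: `q` is a partition of `[m̄]` (identified with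
a partition of `[m]` by relabeling) such that `p ∪ q` is non-crossing on the interleaved
set, and `q` is the greatest such partition for the reverse refinement order. -/
def IsKr {m : ℕ} (p q : Finset (Finset (Fin m))) : Prop :=
  IsPartition q ∧ IsNonCrossing (unionPart p q) ∧
    ∀ q' : Finset (Finset (Fin m)), IsPartition q' → IsNonCrossing (unionPart p q') →
      Refines q' q

/-- The Kreweras complement `Kr(p)`, as a function (defined via choice: for a
non-crossing partition `p` the complement exists and is unique). -/
noncomputable def kr {m : ℕ} (p : Finset (Finset (Fin m))) : Finset (Finset (Fin m)) :=
  if h : ∃ q, IsKr p q then h.choose else ∅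
/-- The reduction map `Red : [(k+1)n] → [n]`, sending `x` to its residue mod `n`
(with `Fin` modelling, `x ↦ x % n`). -/
def red {k n : ℕ} (x : Fin ((k + 1) * n)) : Fin n :=
  ⟨x.1 % n, Nat.mod_lt _ (Nat.pos_of_ne_zero (by rintro rfl; exact absurd x.2 (by simp)))⟩

/-- The image of a collection of blocks under the reduction map. -/
noncomputable def redPart {k n : ℕ} (P : Finset (Finset (Fin ((k + 1) * n)))) :
    Finset (Finset (Fin n)) :=
  P.image fun B => B.image red

/-- The reduction map on the interleaved set, preserving bars. -/
def redInterl {k n : ℕ} (x : Interl ((k + 1) * n)) : Interl n :=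
  toLex (red (ofLex x).1, (ofLex x).2)

/-- `NC^{(k)}(n)`: the non-crossing partitions of `[(k+1)n]` satisfying the mod `n`
reduction property, i.e. `Red(π)` is a non-crossing partition of `[n]` and
`Red(Kr(π))` is a non-crossing partition of `[n̄]`. -/
def NCk (k n : ℕ) : Set (Finset (Finset (Fin ((k + 1) * n)))) :=
  {π | IsPartition π ∧ IsNonCrossing π ∧
       IsPartition (redPart π) ∧ IsNonCrossing (redPart π) ∧
       IsPartition (redPart (kr π)) ∧ IsNonCrossing (redPart (kr π))}

/-- The involution `σ` of `[2n]` given by `σ(x) = x + n` if `x ≤ n`, `σ(x) = x − n`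
otherwise (0-indexed: swap the two halves of `Fin (2n)`). -/
def sigmaInv {n : ℕ} (x : Fin (2 * n)) : Fin (2 * n) :=
  if h : x.1 < n then ⟨x.1 + n, by omega⟩ else ⟨x.1 - n, by omega⟩

/-! For non-crossing `π` the Kreweras complement is explicit: `i` and `j` lie in one block of
`Kr(π)` iff no block of `π` is separated by the interval between them. If `π` is invariant under
the half-turn `σ`, so is this relation, hence `Kr(π)` is again a `σ`-invariant non-crossing
partition. Reduction mod `n` identifies exactly the points `x` and `σ x`, so the reduced blocks
of a `σ`-invariant partition form a partition, and a crossing of reduced blocks lifts to a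
crossing upstairs, possibly after replacing one block by its image under `σ`. Conversely, if the
reduced blocks form a partition, two points in one block of `π` must have their `σ`-images in
one block, which is `σ`-invariance. -/

open Finset

lemma IsPartition.eq_of_mem {X : Type*} {P : Finset (Finset X)} (hP : IsPartition P)
    {B B' : Finset X} (hB : B ∈ P) (hB' : B' ∈ P) {x : X} (hx : x ∈ B) (hx' : x ∈ B') :
    B = B' :=
  (hP.2 x).unique ⟨hB, hx⟩ ⟨hB', hx'⟩

lemma IsPartition.subset_of_refines {X : Type*} {P Q : Finset (Finset X)} (hP : IsPartition P)
    (hPQ : Refines P Q) (hQP : Refines Q P) : P ⊆ Q := by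
  intro B hB
  obtain ⟨C, hC, hBC⟩ := hPQ B hB
  obtain ⟨B', hB', hCB'⟩ := hQP C hC
  obtain ⟨x, hx⟩ := hP.1 B hB
  obtain rfl := hP.eq_of_mem hB hB' hx (hCB' (hBC hx))
  rwa [hBC.antisymm hCB']

lemma IsPartition.eq_of_refines {X : Type*} {P Q : Finset (Finset X)} (hP : IsPartition P)
    (hQ : IsPartition Q) (hPQ : Refines P Q) (hQP : Refines Q P) : P = Q :=
  (hP.subset_of_refines hPQ hQP).antisymm (hQ.subset_of_refines hQP hPQ)

lemma IsPartition.image_mem_of_involutive {X : Type*} [DecidableEq X] {P : Finset (Finset X)}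
    (hP : IsPartition P) {f : X → X} (hf : Function.Involutive f)
    (h : ∀ B ∈ P, ∀ x ∈ B, ∀ y ∈ B, ∃ D ∈ P, f x ∈ D ∧ f y ∈ D) :
    ∀ B ∈ P, B.image f ∈ P := by
  intro B hB
  obtain ⟨x, hx⟩ := hP.1 B hB
  obtain ⟨D, ⟨hD, hfx⟩, -⟩ := hP.2 (f x)
  suffices B.image f = D from this ▸ hD
  ext z
  constructor
  · rintro hz
    obtain ⟨y, hy, rfl⟩ := mem_image.1 hz
    obtain ⟨D', hD', hfx', hfy⟩ := h B hB x hx y hy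
    exact hP.eq_of_mem hD' hD hfx' hfx ▸ hfy
  · intro hz
    obtain ⟨B', hB', hx', hfz⟩ := h D hD (f x) hfx z hz
    rw [hf x] at hx'
    exact mem_image.2 ⟨f z, hP.eq_of_mem hB' hB hx' hx ▸ hfz, hf z⟩

section Kreweras

variable {m : ℕ}

/-- `x ≤ i ↔ x ≤ j` says that `x` lies outside the interval `(min i j, max i j]`. -/
def krRel (π : Finset (Finset (Fin m))) (i j : Fin m) : Prop :=
  ∀ B ∈ π, ∀ x ∈ B, ∀ y ∈ B, ((x ≤ i ↔ x ≤ j) ↔ (y ≤ i ↔ y ≤ j))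

variable {π : Finset (Finset (Fin m))} {i j l : Fin m}

lemma krRel_refl (π : Finset (Finset (Fin m))) (i : Fin m) : krRel π i i := by
  intro B _ x _ y _; tauto

lemma krRel.symm (h : krRel π i j) : krRel π j i := by
  intro B hB x hx y hy; have := h B hB x hx y hy; tauto

lemma krRel.trans (h₁ : krRel π i j) (h₂ : krRel π j l) : krRel π i l := by
  intro B hB x hx y hy; have := h₁ B hB x hx y hy; have := h₂ B hB x hx y hy; tauto

lemma krRel_of_crossing {a b c d : Fin m} (hab : a < b) (hbc : b < c) (hcd : c < d)
    (hac : krRel π a c) (hbd : krRel π b d) : krRel π a b := by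
  intro B hB x hx y hy
  have := hac B hB x hx y hy
  have := hbd B hB x hx y hy
  simp only [Fin.le_def, Fin.lt_def] at *
  omega

noncomputable def krClass (π : Finset (Finset (Fin m))) (i : Fin m) : Finset (Fin m) :=
  univ.filter (krRel π i)

noncomputable def krBlocks (π : Finset (Finset (Fin m))) : Finset (Finset (Fin m)) :=
  univ.image (krClass π)

lemma mem_krClass : j ∈ krClass π i ↔ krRel π i j := by
  simp [krClass]

lemma krClass_mem_krBlocks (π : Finset (Finset (Fin m))) (i : Fin m) :
    krClass π i ∈ krBlocks π :=
  mem_image_of_mem _ (mem_univ i)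

lemma krRel_of_mem_krBlocks {C : Finset (Fin m)} (hC : C ∈ krBlocks π) (hi : i ∈ C)
    (hj : j ∈ C) : krRel π i j := by
  obtain ⟨l, -, rfl⟩ := mem_image.1 hC
  exact (mem_krClass.1 hi).symm.trans (mem_krClass.1 hj)

lemma isPartition_krBlocks (π : Finset (Finset (Fin m))) : IsPartition (krBlocks π) := by
  refine ⟨fun C hC => ?_, fun i => ⟨krClass π i, ⟨krClass_mem_krBlocks π i,
    mem_krClass.2 (krRel_refl π i)⟩, ?_⟩⟩
  · obtain ⟨i, -, rfl⟩ := mem_image.1 hC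
    exact ⟨i, mem_krClass.2 (krRel_refl π i)⟩
  · rintro C ⟨hC, hiC⟩
    obtain ⟨j, -, rfl⟩ := mem_image.1 hC
    ext l
    simp only [mem_krClass]
    exact ⟨fun h => (mem_krClass.1 hiC).symm.trans h, fun h => (mem_krClass.1 hiC).trans h⟩

lemma isNonCrossing_krBlocks (π : Finset (Finset (Fin m))) : IsNonCrossing (krBlocks π) := by
  rintro a b c d hab hbc hcd ⟨C, hC, haC, hcC⟩ ⟨D, hD, hbD, hdD⟩
  have hab' := krRel_of_crossing hab hbc hcd (krRel_of_mem_krBlocks hC haC hcC)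
    (krRel_of_mem_krBlocks hD hbD hdD)
  exact ⟨krClass π a, krClass_mem_krBlocks π a, mem_krClass.2 (krRel_refl π a),
    mem_krClass.2 hab'⟩

lemma toLex_lt_toLex_iff {i j : Fin m} {s t : Bool} :
    toLex (i, s) < toLex (j, t) ↔ 2 * i.1 + s.toNat < 2 * j.1 + t.toNat := by
  have : ¬ (true < false) := by decide
  rw [Prod.Lex.toLex_lt_toLex, Fin.lt_def, Fin.ext_iff]
  cases s <;> cases t <;> simp [Bool.false_lt_true, this] <;> omega

lemma toLex_mem_unbar {B : Finset (Fin m)} {s : Bool} :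
    toLex (i, s) ∈ unbar B ↔ i ∈ B ∧ s = false := by
  simp [unbar, eq_comm]

lemma toLex_mem_barred {B : Finset (Fin m)} {s : Bool} :
    toLex (i, s) ∈ barred B ↔ i ∈ B ∧ s = true := by
  simp [barred, eq_comm]

lemma exists_mem_unionPart_iff {p q : Finset (Finset (Fin m))} {s t : Bool} :
    (∃ Z ∈ unionPart p q, toLex (i, s) ∈ Z ∧ toLex (j, t) ∈ Z) ↔
      s = t ∧ ∃ B ∈ cond s q p, i ∈ B ∧ j ∈ B := by
  constructor
  · rintro ⟨Z, hZ, hi, hj⟩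
    rcases mem_union.1 hZ with hZ | hZ <;> obtain ⟨B, hB, rfl⟩ := mem_image.1 hZ
    · rw [toLex_mem_unbar] at hi hj
      rw [hi.2, hj.2]
      exact ⟨rfl, B, hB, hi.1, hj.1⟩
    · rw [toLex_mem_barred] at hi hj
      rw [hi.2, hj.2]
      exact ⟨rfl, B, hB, hi.1, hj.1⟩
  · rintro ⟨rfl, B, hB, hi, hj⟩
    cases s
    · exact ⟨unbar B, mem_union_left _ (mem_image_of_mem _ hB), toLex_mem_unbar.2 ⟨hi, rfl⟩,
        toLex_mem_unbar.2 ⟨hj, rfl⟩⟩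
    · exact ⟨barred B, mem_union_right _ (mem_image_of_mem _ hB),
        toLex_mem_barred.2 ⟨hi, rfl⟩, toLex_mem_barred.2 ⟨hj, rfl⟩⟩

lemma isNonCrossing_unionPart_krBlocks (hnc : IsNonCrossing π) :
    IsNonCrossing (unionPart π (krBlocks π)) := by
  intro x y z w hxy hyz hzw hxz hyw
  obtain ⟨⟨a, s⟩, rfl⟩ := toLex.surjective x
  obtain ⟨⟨b, t⟩, rfl⟩ := toLex.surjective y
  obtain ⟨⟨c, s'⟩, rfl⟩ := toLex.surjective z
  obtain ⟨⟨d, t'⟩, rfl⟩ := toLex.surjective w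
  rw [exists_mem_unionPart_iff] at hxz hyw ⊢
  obtain ⟨rfl, B, hB, ha, hc⟩ := hxz
  obtain ⟨rfl, D, hD, hb, hd⟩ := hyw
  simp only [toLex_lt_toLex_iff] at hxy hyz hzw
  cases s <;> cases t <;> simp only [Bool.toNat_false, Bool.toNat_true] at hxy hyz hzw
  · exact ⟨rfl, hnc a b c d (by omega) (by omega) (by omega) ⟨B, hB, ha, hc⟩ ⟨D, hD, hb, hd⟩⟩
  · have := krRel_of_mem_krBlocks hD hb hd B hB a ha c hc
    simp only [Fin.le_def] at this
    omega
  · have := krRel_of_mem_krBlocks hB ha hc D hD b hb d hd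
    simp only [Fin.le_def] at this
    omega
  · exact ⟨rfl, isNonCrossing_krBlocks π a b c d (by omega) (by omega) (by omega)
      ⟨B, hB, ha, hc⟩ ⟨D, hD, hb, hd⟩⟩

/-- Otherwise `v < l̄ < u < h̄` or `l̄ < u < h̄ < v` would be a crossing of a barred with an
unbarred block. -/
lemma mem_Ioc_of_isNonCrossing_unionPart {q : Finset (Finset (Fin m))}
    (hnc : IsNonCrossing (unionPart π q)) {C B : Finset (Fin m)} (hC : C ∈ q) (hB : B ∈ π)
    {l h u v : Fin m} (hl : l ∈ C) (hh : h ∈ C) (hu : u ∈ B) (hv : v ∈ B)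
    (hul : u ∈ Ioc l h) : v ∈ Ioc l h := by
  have hlh : ∃ Z ∈ unionPart π q, toLex (l, true) ∈ Z ∧ toLex (h, true) ∈ Z :=
    exists_mem_unionPart_iff.2 ⟨rfl, C, hC, hl, hh⟩
  have huv : ∃ Z ∈ unionPart π q, toLex (u, false) ∈ Z ∧ toLex (v, false) ∈ Z :=
    exists_mem_unionPart_iff.2 ⟨rfl, B, hB, hu, hv⟩
  have hvu : ∃ Z ∈ unionPart π q, toLex (v, false) ∈ Z ∧ toLex (u, false) ∈ Z :=
    exists_mem_unionPart_iff.2 ⟨rfl, B, hB, hv, hu⟩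
  simp only [mem_Ioc, Fin.lt_def, Fin.le_def] at hul ⊢
  by_contra hout
  have hlt {i j : Fin m} {s t : Bool} (hij : 2 * i.1 + s.toNat < 2 * j.1 + t.toNat) :
      toLex (i, s) < toLex (j, t) :=
    toLex_lt_toLex_iff.2 hij
  have : true.toNat = 1 := rfl
  have : false.toNat = 0 := rfl
  rcases Nat.lt_or_ge l.1 v.1 with hlv | hvl
  · exact Bool.noConfusion (exists_mem_unionPart_iff.1 (hnc _ _ _ _
      (hlt (by omega)) (hlt (by omega)) (hlt (by omega)) hlh huv)).1
  · exact Bool.noConfusion (exists_mem_unionPart_iff.1 (hnc _ _ _ _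
      (hlt (by omega)) (hlt (by omega)) (hlt (by omega)) hvu hlh)).1

lemma refines_krBlocks {q : Finset (Finset (Fin m))} (hq : IsPartition q)
    (hnc : IsNonCrossing (unionPart π q)) : Refines q (krBlocks π) := by
  intro C hC
  obtain ⟨i, hi⟩ := hq.1 C hC
  refine ⟨krClass π i, krClass_mem_krBlocks π i, fun j hj => mem_krClass.2 ?_⟩
  intro B hB x hx y hy
  have := mem_Ioc_of_isNonCrossing_unionPart hnc hC hB hi hj hx hy
  have := mem_Ioc_of_isNonCrossing_unionPart hnc hC hB hi hj hy hx
  have := mem_Ioc_of_isNonCrossing_unionPart hnc hC hB hj hi hx hy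
  have := mem_Ioc_of_isNonCrossing_unionPart hnc hC hB hj hi hy hx
  simp only [mem_Ioc, Fin.lt_def, Fin.le_def] at *
  omega

lemma kr_eq_krBlocks (hnc : IsNonCrossing π) : kr π = krBlocks π := by
  have hK : IsKr π (krBlocks π) :=
    ⟨isPartition_krBlocks π, isNonCrossing_unionPart_krBlocks hnc, fun _ hq hncq =>
      refines_krBlocks hq hncq⟩
  have hex : ∃ q, IsKr π q := ⟨_, hK⟩
  obtain ⟨hpart, hncu, hmax⟩ := hex.choose_spec
  rw [kr, dif_pos hex]
  exact hpart.eq_of_refines hK.1 (hK.2.2 _ hpart hncu) (hmax _ hK.1 hK.2.1)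

end Kreweras

section TypeB

variable {n : ℕ}

def SigmaInvariant (P : Finset (Finset (Fin (2 * n)))) : Prop :=
  ∀ B ∈ P, B.image sigmaInv ∈ P

lemma sigmaInv_val (x : Fin (2 * n)) :
    (sigmaInv x).1 = if x.1 < n then x.1 + n else x.1 - n := by
  unfold sigmaInv
  split_ifs <;> rfl

lemma sigmaInv_involutive : Function.Involutive (sigmaInv (n := n)) := by
  intro x
  have := x.2
  ext
  rw [sigmaInv_val, sigmaInv_val]
  split_ifs <;> omega

lemma red_eq_iff {x : Fin (2 * n)} {a : Fin n} : red x = a ↔ x.1 = a.1 ∨ x.1 = a.1 + n := by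
  have hx := x.2
  have ha := a.2
  rw [Fin.ext_iff, show (red x).1 = x.1 % n from rfl]
  rcases Nat.lt_or_ge x.1 n with h | h
  · rw [Nat.mod_eq_of_lt h]
    omega
  · rw [Nat.mod_eq_sub_mod h, Nat.mod_eq_of_lt (by omega)]
    omega

lemma red_sigmaInv (x : Fin (2 * n)) : red (sigmaInv x) = red x := by
  rw [red_eq_iff, sigmaInv_val]
  have := x.2
  have := (red_eq_iff (x := x)).1 rfl
  split_ifs <;> omega

lemma red_eq_red_iff {x y : Fin (2 * n)} : red x = red y ↔ x = y ∨ x = sigmaInv y := by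
  rw [red_eq_iff, Fin.ext_iff, Fin.ext_iff, sigmaInv_val]
  have := y.2
  have := (red_eq_iff (x := y)).1 rfl
  split_ifs <;> omega

lemma image_red_image_sigmaInv (B : Finset (Fin (2 * n))) :
    (B.image sigmaInv).image red = B.image red := by
  rw [image_image]
  exact image_congr fun x _ => red_sigmaInv x

variable {P : Finset (Finset (Fin (2 * n)))}

lemma SigmaInvariant.exists_lift (hσ : SigmaInvariant P) {C : Finset (Fin n)}
    (hC : C ∈ redPart P) {a : Fin n} (ha : a ∈ C) :
    ∃ B ∈ P, B.image red = C ∧ ∃ x ∈ B, x.1 = a.1 := by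
  obtain ⟨B, hB, rfl⟩ := mem_image.1 hC
  obtain ⟨x, hx, rfl⟩ := mem_image.1 ha
  rcases red_eq_iff.1 (rfl : red x = red x) with h | h
  · exact ⟨B, hB, rfl, x, hx, h⟩
  · refine ⟨B.image sigmaInv, hσ B hB, image_red_image_sigmaInv B, sigmaInv x,
      mem_image_of_mem _ hx, ?_⟩
    have := x.2
    rw [sigmaInv_val]
    split_ifs <;> omega

lemma isPartition_redPart (hP : IsPartition P) (hσ : SigmaInvariant P) :
    IsPartition (redPart P) := by
  refine ⟨fun C hC => ?_, fun a => ?_⟩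
  · obtain ⟨B, hB, rfl⟩ := mem_image.1 hC
    exact (hP.1 B hB).image red
  · obtain ⟨B, ⟨hB, hxB⟩, -⟩ := hP.2 ⟨a.1, by omega⟩
    refine ⟨B.image red, ⟨mem_image_of_mem _ hB, mem_image.2 ⟨_, hxB, red_eq_iff.2 (Or.inl rfl)⟩⟩,
      fun C ⟨hC, haC⟩ => ?_⟩
    obtain ⟨B', hB', rfl, x, hx, hxa⟩ := hσ.exists_lift hC haC
    have hxB' : x ∈ B := by convert hxB using 1; exact Fin.ext hxa
    rw [hP.eq_of_mem hB' hB hx hxB']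

lemma isNonCrossing_redPart (hP : IsPartition P) (hnc : IsNonCrossing P)
    (hσ : SigmaInvariant P) : IsNonCrossing (redPart P) := by
  rintro a b c d hab hbc hcd ⟨C, hC, haC, hcC⟩ ⟨D, hD, hbD, hdD⟩
  obtain ⟨B, hB, rfl, x, hx, hxa⟩ := hσ.exists_lift hC haC
  obtain ⟨B', hB', rfl, y, hy, hyb⟩ := hσ.exists_lift hD hbD
  obtain ⟨z, hz, hzc⟩ := mem_image.1 hcC
  obtain ⟨w, hw, hwd⟩ := mem_image.1 hdD
  have hxa : red x = a := red_eq_iff.2 (Or.inl hxa)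
  have hyb : red y = b := red_eq_iff.2 (Or.inl hyb)
  have hz' := red_eq_iff.1 hzc
  have hw' := red_eq_iff.1 hwd
  have := d.2
  simp only [Fin.lt_def] at hab hbc hcd
  by_cases hrot : z.1 = c.1 + n ∧ w.1 = d.1
  · -- `y < σ z < w < σ x` is a crossing of `B'` with `σ B`
    have hσz := sigmaInv_val z
    have hσx := sigmaInv_val x
    obtain ⟨K, hK, hyK, hzK⟩ := hnc y (sigmaInv z) w (sigmaInv x)
      (by rw [Fin.lt_def]; split_ifs at hσz <;> omega)
      (by rw [Fin.lt_def]; split_ifs at hσz <;> omega)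
      (by rw [Fin.lt_def]; split_ifs at hσx <;> omega)
      ⟨B', hB', hy, hw⟩ ⟨B.image sigmaInv, hσ B hB, mem_image_of_mem _ hz, mem_image_of_mem _ hx⟩
    have hbc : b ∈ K.image red ∧ c ∈ K.image red := by
      rw [← hyb, ← hzc, ← red_sigmaInv z]
      exact ⟨mem_image_of_mem _ hyK, mem_image_of_mem _ hzK⟩
    rw [← (isPartition_redPart hP hσ).eq_of_mem (mem_image_of_mem _ hK) hC hbc.2 hcC] at haC
    exact ⟨K.image red, mem_image_of_mem _ hK, haC, hbc.1⟩
  · obtain ⟨K, hK, hxK, hyK⟩ := hnc x y z w (by rw [Fin.lt_def]; omega)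
      (by rw [Fin.lt_def]; omega) (by rw [Fin.lt_def]; omega) ⟨B, hB, hx, hz⟩ ⟨B', hB', hy, hw⟩
    exact ⟨K.image red, mem_image_of_mem _ hK, hxa ▸ mem_image_of_mem _ hxK,
      hyb ▸ mem_image_of_mem _ hyK⟩

/-- `σ` is the rotation by `n` of the cycle `[2n]`: it maps the interval between `i` and `j` to the
interval between `σ i` and `σ j` or to its complement, and `krRel` cannot tell the two apart. -/
lemma krRel_sigmaInv (hσ : SigmaInvariant P) {i j : Fin (2 * n)} (h : krRel P i j) :
    krRel P (sigmaInv i) (sigmaInv j) := by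
  intro B hB x hx y hy
  have hσB := h _ (hσ B hB) _ (mem_image_of_mem _ hx) _ (mem_image_of_mem _ hy)
  have := i.2; have := j.2; have := x.2; have := y.2
  simp only [Fin.le_def, sigmaInv_val] at hσB ⊢
  split_ifs at hσB ⊢ <;> omega

lemma SigmaInvariant.krBlocks (hσ : SigmaInvariant P) : SigmaInvariant (krBlocks P) := by
  intro C hC
  obtain ⟨i, -, rfl⟩ := mem_image.1 hC
  suffices (krClass P i).image sigmaInv = krClass P (sigmaInv i) from
    this ▸ krClass_mem_krBlocks P _
  ext j
  rw [mem_image, mem_krClass]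
  refine ⟨fun ⟨l, hl, hlj⟩ => hlj ▸ krRel_sigmaInv hσ (mem_krClass.1 hl), fun h => ?_⟩
  refine ⟨sigmaInv j, mem_krClass.2 ?_, sigmaInv_involutive j⟩
  simpa only [sigmaInv_involutive i] using krRel_sigmaInv hσ h

lemma mem_or_sigmaInv_mem_of_isPartition_redPart (hrp : IsPartition (redPart P))
    {B D : Finset (Fin (2 * n))} (hB : B ∈ P) (hD : D ∈ P) {x y : Fin (2 * n)} (hx : x ∈ B)
    (hxD : sigmaInv x ∈ D) (hy : y ∈ B) : y ∈ D ∨ sigmaInv y ∈ D := by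
  have hBD : B.image red = D.image red := hrp.eq_of_mem (mem_image_of_mem _ hB)
    (mem_image_of_mem _ hD) (mem_image_of_mem _ hx) (red_sigmaInv x ▸ mem_image_of_mem _ hxD)
  obtain ⟨z, hz, hzy⟩ := mem_image.1 (hBD ▸ mem_image_of_mem red hy)
  rcases red_eq_red_iff.1 hzy with rfl | rfl
  exacts [Or.inl hz, Or.inr hz]

lemma sigmaInvariant_of_isPartition_redPart (hP : IsPartition P)
    (hrp : IsPartition (redPart P)) : SigmaInvariant P := by
  refine hP.image_mem_of_involutive sigmaInv_involutive fun B hB x hx y hy => ?_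
  obtain ⟨D, ⟨hD, hxD⟩, -⟩ := hP.2 (sigmaInv x)
  rcases mem_or_sigmaInv_mem_of_isPartition_redPart hrp hB hD hx hxD hy with hyD | hyD
  · obtain rfl := hP.eq_of_mem hD hB hyD hy
    obtain ⟨D', ⟨hD', hyD'⟩, -⟩ := hP.2 (sigmaInv y)
    have hD'D : D' = D := by
      rcases mem_or_sigmaInv_mem_of_isPartition_redPart hrp hD hD' hy hyD' hx with h | h
      exacts [hP.eq_of_mem hD' hD h hx, hP.eq_of_mem hD' hD h hxD]
    exact ⟨D, hD, hxD, hD'D ▸ hyD'⟩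
  · exact ⟨D, hD, hxD, hyD⟩

end TypeB

theorem stmt7_general (n : ℕ)
    (π : Finset (Finset (Fin ((1 + 1) * n))))
    (hpart : IsPartition π) (hnc : IsNonCrossing π) :
    (∀ B ∈ π, B.image (sigmaInv (n := n)) ∈ π) ↔ π ∈ NCk 1 n := by
  refine ⟨fun hσ => ?_, fun ⟨_, _, hrp, _⟩ => sigmaInvariant_of_isPartition_redPart hpart hrp⟩
  have hK : SigmaInvariant (krBlocks π) := SigmaInvariant.krBlocks hσ
  have hkr := kr_eq_krBlocks hnc
  exact ⟨hpart, hnc, isPartition_redPart hpart hσ, isNonCrossing_redPart hpart hnc hσ,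
    hkr ▸ isPartition_redPart (isPartition_krBlocks π) hK,
    hkr ▸ isNonCrossing_redPart (isPartition_krBlocks π) (isNonCrossing_krBlocks π) hK⟩

/-- **Statement 7.** For `k = 1`, a non-crossing partition `π` of `[2n]` is invariant
under the half-turn involution `σ` (the image of every block is again a block) if and
only if `π ∈ NC^{(1)}(n)`; i.e. Reiner's type `B` non-crossing partitions coincide
with the non-crossing partitions of type `1`. -/
theorem stmt7 (n : ℕ) (hn : 1 ≤ n)
    (π : Finset (Finset (Fin ((1 + 1) * n))))
    (hpart : IsPartition π) (hnc : IsNonCrossing π) :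
    (∀ B ∈ π, B.image (sigmaInv (n := n)) ∈ π) ↔ π ∈ NCk 1 n :=
  stmt7_general n π hpart hnc
end
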